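/- arXiv:2107.00213 — 2 statements merged into one kernel-verified Lean document; each statement's English description precedes it below -/
import Mathlib

section
/- For every integer n ≥ 1, the strong equitable vertex 1-arboricity of the complete bipartite graph K_{2,n} equals ⌈(n+3)/3⌉. -/
/-!
In `K_{2,n}` the colour class of a vertex `u` of the 2-side has at most two elements: it contains
at most one neighbour `b` of `u`, and if it does, `b` forbids the other vertex of the 2-side. By
equitability every other class has at most three elements, so `n + 2 ≤ 2 + 3 (q - 1)`, i.e.
`n + 3 ≤ 3 q`. Conversely, if `n + 3 ≤ 3 q` there is even an equitable proper colouring: an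
injective one when `n + 2 ≤ q`, and otherwise the 2-side as one class and the `n`-side coloured
cyclically by the remaining `q - 1` colours, giving classes of sizes in `{1, 2}` or `{2, 3}`.
-/

open Finset

/-- The complete multipartite graph with parts of sizes `n 0, …, n (k-1)`. -/
def CompleteMultipartite (k : ℕ) (n : Fin k → ℕ) :
    SimpleGraph (Σ i : Fin k, Fin (n i)) where
  Adj v w := v.1 ≠ w.1
  symm := ⟨fun _ _ h => h.symm⟩
  loopless := ⟨fun _ h => h rfl⟩

/-- The sizes of any two color classes of `C` differ by at most one. -/
def EquitableSizes {V : Type} [Fintype V] {q : ℕ} (C : V → Fin q) : Prop :=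
  ∀ i j : Fin q,
    (univ.filter (fun v => C v = i)).card ≤ (univ.filter (fun v => C v = j)).card + 1

/-- An equitable `(q,1)`-tree-coloring: classes of sizes pairwise differing by at
most one, each inducing a forest of maximum degree at most 1 (equivalently,
maximum degree at most 1 inside each class). -/
def IsEqTreeColoring {V : Type} [Fintype V] (G : SimpleGraph V) (q : ℕ) : Prop :=
  ∃ C : V → Fin q, EquitableSizes C ∧
    ∀ v w x : V, C w = C v → C x = C v → G.Adj v w → G.Adj v x → w = x

/-- An equitable `q`-coloring: a proper coloring with classes of sizes pairwise
differing by at most one. -/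
def IsEqColoring {V : Type} [Fintype V] (G : SimpleGraph V) (q : ℕ) : Prop :=
  ∃ C : V → Fin q, EquitableSizes C ∧ ∀ v w : V, G.Adj v w → C v ≠ C w

/-- The number `d` of Definition 1: the minimum integer `d ≥ ⌈N/q⌉` such that
either two of the `n i` are not divisible by `d`, or some `n i` satisfies
`n i / ⌊n i / d⌋ > d + 1`. -/
noncomputable def dOf (k q : ℕ) (n : Fin k → ℕ) : ℕ :=
  sInf {d : ℕ | ((∑ i, n i) + q - 1) / q ≤ d ∧
    ((∃ i j : Fin k, i ≠ j ∧ ¬ d ∣ n i ∧ ¬ d ∣ n j) ∨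
     (∃ i : Fin k, ((n i : ℚ) / ((n i / d : ℕ) : ℚ) > d + 1)))}

/-- `p(q : n₁, …, n_k) = ⌈n₁/d⌉ + ⋯ + ⌈n_k/d⌉`. -/
noncomputable def pOf (k q : ℕ) (n : Fin k → ℕ) : ℕ :=
  ∑ i, (n i + dOf k q n - 1) / dOf k q n

def DegreeLeOneInClasses {V : Type} {q : ℕ} (G : SimpleGraph V) (C : V → Fin q) : Prop :=
  ∀ v w x : V, C w = C v → C x = C v → G.Adj v w → G.Adj v x → w = x

lemma DegreeLeOneInClasses.card_le_one {V α : Type} {q : ℕ} {G : SimpleGraph V} {C : V → Fin q}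
    (hC : DegreeLeOneInClasses G C) {f : α → V} (hf : f.Injective) (v : V) {s : Finset α}
    (hs : ∀ a ∈ s, C (f a) = C v ∧ G.Adj v (f a)) : #s ≤ 1 :=
  Finset.card_le_one.2 fun a ha b hb =>
    hf (hC v _ _ (hs a ha).1 (hs b hb).1 (hs a ha).2 (hs b hb).2)

section Equitable

variable {V : Type} [Fintype V] {q : ℕ}

lemma equitableSizes_of_card_mem {C : V → Fin q} (s : ℕ)
    (h : ∀ i, s ≤ #{v | C v = i} ∧ #{v | C v = i} ≤ s + 1) : EquitableSizes C :=
  fun i j => by have := h i; have := h j; omega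

lemma EquitableSizes.card_lt_mul {C : V → Fin q} (hC : EquitableSizes C) (v : V) {m : ℕ}
    (hv : #{w | C w = C v} ≤ m) : Fintype.card V < (m + 1) * q :=
  calc Fintype.card V = ∑ j, #{w | C w = j} := card_eq_sum_card_fiberwise fun _ _ => mem_univ _
    _ < ∑ _j : Fin q, (m + 1) :=
      sum_lt_sum (fun j _ => (hC j (C v)).trans (by omega)) ⟨C v, mem_univ _, by omega⟩
    _ = (m + 1) * q := by simp [mul_comm]

lemma isEqColoring_of_card_le (G : SimpleGraph V) (h : Fintype.card V ≤ q) :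
    IsEqColoring G q := by
  set C : V → Fin q := Fin.castLE h ∘ Fintype.equivFin V
  have hC : C.Injective := (Fin.castLE_injective h).comp (Fintype.equivFin V).injective
  refine ⟨C, equitableSizes_of_card_mem 0 fun i => ⟨Nat.zero_le _, ?_⟩,
    fun v w hvw => hC.ne hvw.ne⟩
  exact card_le_one.2 fun a ha b hb => hC ((mem_filter.1 ha).2.trans (mem_filter.1 hb).2.symm)

lemma IsEqColoring.isEqTreeColoring {G : SimpleGraph V} (h : IsEqColoring G q) :
    IsEqTreeColoring G q :=
  let ⟨C, hEq, hC⟩ := h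
  ⟨C, hEq, fun v w _ hw _ hvw _ => absurd hw.symm (hC v w hvw)⟩

end Equitable

@[simp]
lemma completeMultipartite_adj {k : ℕ} {n : Fin k → ℕ} {v w : Σ i : Fin k, Fin (n i)} :
    (CompleteMultipartite k n).Adj v w ↔ v.1 ≠ w.1 :=
  Iff.rfl

section CompleteBipartite

variable {m n q : ℕ}

lemma card_completeBipartite : Fintype.card (Σ i : Fin 2, Fin (![m, n] i)) = m + n := by
  simp [Fintype.card_sigma, Fin.sum_univ_two]

lemma card_fiber_completeBipartite {α : Type} [DecidableEq α]
    (f : (Σ i : Fin 2, Fin (![m, n] i)) → α) (c : α) :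
    #{v | f v = c} = #{a : Fin m | f ⟨0, a⟩ = c} + #{t : Fin n | f ⟨1, t⟩ = c} := by
  simp only [card_filter]
  rw [Fintype.sum_sigma, Fin.sum_univ_two]
  rfl

lemma card_class_le_max {C : (Σ i : Fin 2, Fin (![m, n] i)) → Fin q}
    (hC : DegreeLeOneInClasses (CompleteMultipartite 2 ![m, n]) C) (a : Fin m) :
    #{v | C v = C ⟨0, a⟩} ≤ max m 2 := by
  rw [card_fiber_completeBipartite]
  have hB : #{t : Fin n | C ⟨1, t⟩ = C ⟨0, a⟩} ≤ 1 :=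
    hC.card_le_one (f := fun t : Fin n => ⟨1, t⟩)
      (sigma_mk_injective (β := fun i : Fin 2 => Fin (![m, n] i)) (i := 1)) _
      fun t ht => ⟨(mem_filter.1 ht).2, by simp⟩
  obtain hB0 | ⟨t, ht⟩ :=
    (filter (fun t : Fin n => C ⟨1, t⟩ = C ⟨0, a⟩) univ).eq_empty_or_nonempty
  · have hA := card_le_univ (filter (fun a' : Fin m => C ⟨0, a'⟩ = C ⟨0, a⟩) univ)
    rw [Fintype.card_fin] at hA
    rw [hB0, card_empty]
    omega
  · have hA : #{a' : Fin m | C ⟨0, a'⟩ = C ⟨0, a⟩} ≤ 1 :=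
      hC.card_le_one (f := fun a' : Fin m => ⟨0, a'⟩)
        (sigma_mk_injective (β := fun i : Fin 2 => Fin (![m, n] i)) (i := 0)) ⟨1, t⟩
        fun a' ha' => ⟨(mem_filter.1 ha').2.trans (mem_filter.1 ht).2.symm, by simp⟩
    omega

theorem IsEqTreeColoring.add_three_le (h : IsEqTreeColoring (CompleteMultipartite 2 ![2, n]) q) :
    n + 3 ≤ 3 * q := by
  obtain ⟨C, hEq, hC⟩ := h
  have := hEq.card_lt_mul ⟨0, (0 : Fin 2)⟩ (card_class_le_max hC 0)
  rw [card_completeBipartite, max_self] at this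
  omega

lemma card_fin_filter_mod_eq {r j : ℕ} (hj : j < r) :
    #{t : Fin n | (t : ℕ) % r = j} = n / r + if j < n % r then 1 else 0 := by
  have h := Nat.count_modEq_card n (Nat.zero_lt_of_lt hj) j
  rw [Nat.mod_eq_of_lt hj, Nat.count_eq_card_filter_range, card_filter] at h
  rw [← h, card_filter, Fin.sum_univ_eq_sum_range (fun t => if t % r = j then 1 else 0)]
  simp [Nat.ModEq, Nat.mod_eq_of_lt hj]

def cyclicColoring (r n : ℕ) (hn : n ≤ 3 * r) : (Σ i : Fin 2, Fin (![2, n] i)) → Fin (r + 1)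
  | ⟨0, _⟩ => Fin.last r
  | ⟨1, t⟩ => Fin.castSucc ⟨t % r, Nat.mod_lt _ (by have := t.isLt; simp at this; omega)⟩

section cyclicColoring

variable {r : ℕ} (hn : n ≤ 3 * r)

@[simp]
lemma cyclicColoring_left (a : Fin 2) : cyclicColoring r n hn ⟨0, a⟩ = Fin.last r :=
  rfl

@[simp]
lemma cyclicColoring_right_eq_castSucc_iff (t : Fin n) (j : Fin r) :
    cyclicColoring r n hn ⟨1, t⟩ = j.castSucc ↔ (t : ℕ) % r = j :=
  Fin.castSucc_inj.trans Fin.ext_iff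

@[simp]
lemma cyclicColoring_right_ne_last (t : Fin n) : cyclicColoring r n hn ⟨1, t⟩ ≠ Fin.last r :=
  Fin.castSucc_ne_last _

lemma cyclicColoring_eq_last_iff (v : Σ i : Fin 2, Fin (![2, n] i)) :
    cyclicColoring r n hn v = Fin.last r ↔ v.1 = 0 :=
  match v with
  | ⟨0, a⟩ => iff_of_true (cyclicColoring_left hn a) rfl
  | ⟨1, t⟩ => iff_of_false (cyclicColoring_right_ne_last hn t) Fin.zero_lt_one.ne'

end cyclicColoring

lemma isEqColoring_cyclicColoring {r : ℕ} (hr : r ≤ n) (hn : n ≤ 3 * r) :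
    IsEqColoring (CompleteMultipartite 2 ![2, n]) (r + 1) := by
  have hlast : #{v | cyclicColoring r n hn v = Fin.last r} = 2 := by
    rw [card_fiber_completeBipartite]
    simp
  have hcast (j : Fin r) : #{v | cyclicColoring r n hn v = j.castSucc} =
      n / r + if (j : ℕ) < n % r then 1 else 0 := by
    rw [card_fiber_completeBipartite, ← card_fin_filter_mod_eq j.isLt]
    simp [(Fin.castSucc_ne_last j).symm]
  refine ⟨cyclicColoring r n hn,
    equitableSizes_of_card_mem (if n < 2 * r then 1 else 2) fun i => ?_, ?_⟩
  · induction i using Fin.lastCases with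
    | last => rw [hlast]; split_ifs <;> omega
    | cast j =>
      rw [hcast]
      have hdiv := Nat.div_add_mod n r
      have hmod := Nat.mod_lt n (Nat.zero_lt_of_lt j.isLt)
      have h3 : n / r ≤ 3 := Nat.div_le_of_le_mul (by omega)
      generalize n / r = d at hdiv h3
      interval_cases d <;> split_ifs <;> omega
  · intro v w hvw hC
    have hv := cyclicColoring_eq_last_iff hn v
    rw [hC, cyclicColoring_eq_last_iff] at hv
    exact hvw (by omega)

lemma isEqTreeColoring_of_add_three_le (h : n + 3 ≤ 3 * q) :
    IsEqTreeColoring (CompleteMultipartite 2 ![2, n]) q := by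
  apply IsEqColoring.isEqTreeColoring
  by_cases hq : n + 2 ≤ q
  · exact isEqColoring_of_card_le _ (by rw [card_completeBipartite]; omega)
  · obtain ⟨r, rfl⟩ : ∃ r, q = r + 1 := ⟨q - 1, by omega⟩
    exact isEqColoring_cyclicColoring (by omega) (by omega)

lemma ceil_add_three_div_three_le_iff : ⌈((n : ℚ) + 3) / 3⌉₊ ≤ q ↔ n + 3 ≤ 3 * q := by
  rw [Nat.ceil_le, div_le_iff₀ three_pos, mul_comm]
  exact_mod_cast Iff.rfl

end CompleteBipartite

theorem stmt1_general (n : ℕ) :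
    IsLeast {p : ℕ | ∀ q, p ≤ q →
        IsEqTreeColoring (CompleteMultipartite 2 ![2, n]) q}
      ⌈((n : ℚ) + 3) / 3⌉₊ :=
  ⟨fun _ hq => isEqTreeColoring_of_add_three_le (ceil_add_three_div_three_le_iff.1 hq),
    fun p hp => ceil_add_three_div_three_le_iff.2 (hp p le_rfl).add_three_le⟩

theorem stmt1 (n : ℕ) (hn : 1 ≤ n) :
    IsLeast {p : ℕ | ∀ q, p ≤ q →
        IsEqTreeColoring (CompleteMultipartite 2 ![2, n]) q}
      ⌈((n : ℚ) + 3) / 3⌉₊ :=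
  stmt1_general n
end

section
/- Let m = 3b+1 and n = 3c+2 for positive integers b and c. Then the strong equitable vertex 1-arboricity of K_{m,n} equals b+c+2. -/
/-!
In a complete multipartite graph, a colour class of maximum degree at most one that meets two
parts has at most two vertices. With `q = b + c + 1` colours we have `m + n = 3q`, so equitability
forces every class to have exactly three vertices; each class then lies inside a part, and `3`
would divide `m = 3b + 1`.

For `q ≥ b + c + 2` colours: if `m + n ≤ 2q`, every equitable colouring has classes of at most two
vertices, which are harmless, and colouring round robin is equitable. Otherwise exactly
`t = m + n - 2q ≤ ⌊m/3⌋ + ⌊n/3⌋` classes are triples; we cut them from the two sides and pair up the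
remaining vertices arbitrarily.
-/

open Finset

section Coloring

variable {V : Type} {q : ℕ}

def IsOneTreeColoring (G : SimpleGraph V) (C : V → Fin q) : Prop :=
  ∀ v w x : V, C w = C v → C x = C v → G.Adj v w → G.Adj v x → w = x

variable [Fintype V]

theorem IsOneTreeColoring.of_card_le_two_or_isIndepSet {G : SimpleGraph V} {C : V → Fin q}
    (h : ∀ i, #{v | C v = i} ≤ 2 ∨ G.IsIndepSet {v | C v = i}) : IsOneTreeColoring G C := by
  intro v w x hw hx hvw hvx
  by_contra hwx
  rcases h (C v) with hcard | hind
  · have : 2 < #{u | C u = C v} :=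
      two_lt_card.mpr ⟨v, by simp, w, by simp [hw], x, by simp [hx], hvw.ne, hvx.ne, hwx⟩
    omega
  · exact hind (by simp) (by simp [hw]) hvw.ne hvw

theorem EquitableSizes.card_fiber_eq {C : V → Fin q} (hC : EquitableSizes C) {s : ℕ}
    (hV : Fintype.card V = s * q) (i : Fin q) : #{v | C v = i} = s := by
  have hsum : ∑ j, #{v | C v = j} = ∑ _j : Fin q, s := by
    rw [sum_const, card_univ, Fintype.card_fin, smul_eq_mul, mul_comm, ← hV, ← card_univ]
    exact (card_eq_sum_card_fiberwise fun v _ => mem_univ (C v)).symm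
  by_contra hne
  rcases Nat.lt_or_gt_of_ne hne with hlt | hgt
  · exact (sum_lt_sum (fun j _ => by have := hC j i; omega) ⟨i, mem_univ _, hlt⟩).ne hsum
  · exact (sum_lt_sum (fun j _ => by have := hC i j; omega) ⟨i, mem_univ _, hgt⟩).ne' hsum

def colorByPosition {N : ℕ} (e : V ≃ Fin N) (g : ℕ → ℕ) (hg : ∀ k < N, g k < q) : V → Fin q :=
  fun v => ⟨g (e v), hg _ (e v).isLt⟩

theorem card_colorByPosition_eq {N : ℕ} (e : V ≃ Fin N) (g : ℕ → ℕ) (hg : ∀ k < N, g k < q)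
    (i : Fin q) : #{v | colorByPosition e g hg v = i} = #{k ∈ range N | g k = i} := by
  apply card_bij (fun v _ => (e v : ℕ))
  · intro v hv
    simp_all [colorByPosition, Fin.ext_iff]
  · exact fun v _ w _ h => e.injective (Fin.ext h)
  · intro k hk
    rw [mem_filter, mem_range] at hk
    exact ⟨e.symm ⟨k, hk.1⟩, by simp [colorByPosition, Fin.ext_iff, hk.2], by simp⟩

theorem isEqTreeColoring_of_card_le_two_mul (G : SimpleGraph V) (h : Fintype.card V ≤ 2 * q) :
    IsEqTreeColoring G q := by
  rcases Nat.eq_zero_or_pos q with rfl | hq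
  · have : IsEmpty V := Fintype.card_eq_zero_iff.mp (by omega)
    exact ⟨isEmptyElim, fun i => i.elim0, fun v => isEmptyElim v⟩
  set N := Fintype.card V
  let C := colorByPosition (Fintype.equivFin V) (· % q) fun k _ => Nat.mod_lt k hq
  have hcard (i : Fin q) : #{v | C v = i} = N / q + if (i : ℕ) < N % q then 1 else 0 := by
    have := Nat.count_modEq_card (b := N) hq i
    simp only [Nat.ModEq, Nat.mod_eq_of_lt i.isLt, Nat.count_eq_card_filter_range] at this
    rw [card_colorByPosition_eq, ← this]
  refine ⟨C, fun i j => by rw [hcard, hcard]; split_ifs <;> omega,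
    IsOneTreeColoring.of_card_le_two_or_isIndepSet fun i => Or.inl ?_⟩
  have hdiv := Nat.div_add_mod N q
  have hle : N / q ≤ 2 := Nat.div_le_of_le_mul (by omega)
  rw [hcard]
  interval_cases hNq : N / q <;> split_ifs <;> omega

end Coloring

def blockColor (tA p k : ℕ) : ℕ :=
  if k < 3 * tA then k / 3
  else if k < 3 * tA + 2 * p then tA + (k - 3 * tA) / 2
  else tA + p + (k - 3 * tA - 2 * p) / 3

theorem card_filter_blockColor_eq {tA p tB i : ℕ} (hi : i < tA + p + tB) :
    #{k ∈ range (3 * tA + 2 * p + 3 * tB) | blockColor tA p k = i}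
      = if tA ≤ i ∧ i < tA + p then 2 else 3 := by
  have hIco (a s : ℕ)
      (h : ∀ k, k < 3 * tA + 2 * p + 3 * tB ∧ blockColor tA p k = i ↔ a ≤ k ∧ k < a + s) :
      #{k ∈ range (3 * tA + 2 * p + 3 * tB) | blockColor tA p k = i} = s := by
    rw [show {k ∈ range (3 * tA + 2 * p + 3 * tB) | blockColor tA p k = i} = Ico a (a + s) by
      ext k; simpa using h k, Nat.card_Ico, Nat.add_sub_cancel_left]
  split_ifs with hpair
  · exact hIco (3 * tA + 2 * (i - tA)) 2 fun k => by unfold blockColor; split_ifs <;> omega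
  · rcases Nat.lt_or_ge i tA with hA | hB
    · exact hIco (3 * i) 3 fun k => by unfold blockColor; split_ifs <;> omega
    · exact hIco (3 * tA + 2 * p + 3 * (i - tA - p)) 3 fun k => by
        unfold blockColor; split_ifs <;> omega

def bipartiteIndex (m n : ℕ) : (Σ i : Fin 2, Fin (![m, n] i)) ≃ Fin (m + n) :=
  finSigmaFinEquiv.trans (finCongr (by simp [Fin.sum_univ_two]))

theorem bipartiteIndex_lt_iff {m n : ℕ} (v : Σ i : Fin 2, Fin (![m, n] i)) :
    (bipartiteIndex m n v : ℕ) < m ↔ v.1 = 0 := by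
  obtain ⟨i, x⟩ := v
  fin_cases i
  · simpa [bipartiteIndex] using x.isLt
  · simp [bipartiteIndex]

theorem isEqTreeColoring_of_blocks {m n tA p tB : ℕ} (hA : 3 * tA ≤ m) (hB : 3 * tB ≤ n)
    (hN : m + n = 3 * tA + 2 * p + 3 * tB) :
    IsEqTreeColoring (CompleteMultipartite 2 ![m, n]) (tA + p + tB) := by
  have hg : ∀ k < 3 * tA + 2 * p + 3 * tB, blockColor tA p k < tA + p + tB := by
    intro k hk; unfold blockColor; split_ifs <;> omega
  let C := colorByPosition ((bipartiteIndex m n).trans (finCongr hN)) (blockColor tA p) hg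
  have hcard (i : Fin (tA + p + tB)) :
      #{v | C v = i} = if tA ≤ (i : ℕ) ∧ (i : ℕ) < tA + p then 2 else 3 := by
    rw [card_colorByPosition_eq, card_filter_blockColor_eq i.isLt]
  refine ⟨C, fun i j => by rw [hcard, hcard]; split_ifs <;> omega,
    IsOneTreeColoring.of_card_le_two_or_isIndepSet fun i => ?_⟩
  by_cases hpair : tA ≤ (i : ℕ) ∧ (i : ℕ) < tA + p
  · exact Or.inl (by rw [hcard, if_pos hpair])
  · -- a triple of colour `i` occupies positions below `3 tA ≤ m` (side `0`)
    -- or at least `m + n - 3 tB ≥ m` (side `1`)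
    have hside (u) (hu : C u = i) : u.1 = 0 ↔ (i : ℕ) < tA := by
      have hi : blockColor tA p (bipartiteIndex m n u) = i := congrArg Fin.val hu
      have hlt := (bipartiteIndex m n u).isLt
      rw [← bipartiteIndex_lt_iff]
      unfold blockColor at hi
      split_ifs at hi <;> omega
    refine Or.inr fun v hv w hw _ hadj => hadj ?_
    have hfin2 : ∀ a b : Fin 2, (a = 0 ↔ b = 0) → a = b := by decide
    exact hfin2 _ _ ((hside v hv).trans (hside w hw).symm)

section Multipartite

variable {k q : ℕ} {n : Fin k → ℕ} {C : (Σ i, Fin (n i)) → Fin q}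

theorem IsOneTreeColoring.eq_or_eq_of_fst_ne (hC : IsOneTreeColoring (CompleteMultipartite k n) C)
    {v w x : Σ i, Fin (n i)} (hw : C w = C v) (hx : C x = C v) (hvw : v.1 ≠ w.1) :
    x = v ∨ x = w := by
  by_cases hvx : v.1 = x.1
  · exact Or.inl (hC w v x hw.symm (hx.trans hw.symm) hvw.symm
      (show w.1 ≠ x.1 from hvx ▸ hvw.symm)).symm
  · exact Or.inr (hC v w x hw hx hvw hvx).symm

theorem IsOneTreeColoring.fst_eq_of_two_lt_card
    (hC : IsOneTreeColoring (CompleteMultipartite k n) C) {c : Fin q} (h3 : 2 < #{v | C v = c})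
    {v w : Σ i, Fin (n i)} (hv : C v = c) (hw : C w = c) : v.1 = w.1 := by
  by_contra hvw
  obtain ⟨x, hx, y, hy, z, hz, hxy, hxz, hyz⟩ := two_lt_card.mp h3
  rw [mem_filter] at hx hy hz
  have hclass (u) (hu : C u = c) : u = v ∨ u = w :=
    hC.eq_or_eq_of_fst_ne (hw.trans hv.symm) (hu.trans hv.symm) hvw
  rcases hclass x hx.2 with rfl | rfl <;> rcases hclass y hy.2 with rfl | rfl <;>
    rcases hclass z hz.2 with rfl | rfl <;> contradiction

theorem three_dvd_of_isEqTreeColoring (h : IsEqTreeColoring (CompleteMultipartite k n) q)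
    (hN : ∑ i, n i = 3 * q) (i : Fin k) : 3 ∣ n i := by
  obtain ⟨C, hEq, (hC : IsOneTreeColoring _ C)⟩ := h
  have hclass (c : Fin q) : #{v | C v = c} = 3 :=
    hEq.card_fiber_eq (by simp [Fintype.card_sigma, hN, mul_comm]) c
  have hpart : #{v : Σ j, Fin (n j) | v.1 = i} = n i := by
    rw [← Fintype.card_subtype, Fintype.card_congr (Equiv.sigmaSubtype i), Fintype.card_fin]
  rw [← hpart, card_eq_sum_card_fiberwise (f := C) (t := univ) fun _ _ => mem_univ _]
  refine dvd_sum fun c _ => ?_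
  by_cases hc : ∃ v, v.1 = i ∧ C v = c
  · obtain ⟨v, hvi, hvc⟩ := hc
    rw [filter_filter, filter_congr fun u _ => ⟨And.right, fun hu =>
      ⟨(hC.fst_eq_of_two_lt_card (by rw [hclass c]; norm_num) hu hvc).trans hvi, hu⟩⟩, hclass c]
  · rw [filter_filter, filter_false_of_mem fun u _ => fun hu => hc ⟨u, hu⟩, card_empty]
    exact dvd_zero 3

end Multipartite

theorem isEqTreeColoring_completeBipartite_of_le {m n q : ℕ} (h : m + n ≤ 2 * q + m / 3 + n / 3) :
    IsEqTreeColoring (CompleteMultipartite 2 ![m, n]) q := by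
  by_cases hpairs : m + n ≤ 2 * q
  · exact isEqTreeColoring_of_card_le_two_mul _ (by simpa [Fintype.card_sigma] using hpairs)
  · set t := m + n - 2 * q
    have := isEqTreeColoring_of_blocks (m := m) (n := n) (tA := min t (m / 3)) (p := q - t)
      (tB := t - min t (m / 3)) (by omega) (by omega) (by omega)
    rwa [show min t (m / 3) + (q - t) + (t - min t (m / 3)) = q by omega] at this

theorem stmt3_general (b c : ℕ) :
    IsLeast {p : ℕ | ∀ q, p ≤ q →
        IsEqTreeColoring (CompleteMultipartite 2 ![3 * b + 1, 3 * c + 2]) q}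
      (b + c + 2) := by
  refine ⟨fun q hq => isEqTreeColoring_completeBipartite_of_le (by omega), fun p hp => ?_⟩
  by_contra! hlt
  have h3 : 3 ∣ 3 * b + 1 := three_dvd_of_isEqTreeColoring (hp (b + c + 1) (by omega))
    (by simp only [Fin.sum_univ_two, Matrix.cons_val_zero, Matrix.cons_val_one]; ring) 0
  omega

theorem stmt3 (b c : ℕ) (hb : 1 ≤ b) (hc : 1 ≤ c) :
    IsLeast {p : ℕ | ∀ q, p ≤ q →
        IsEqTreeColoring (CompleteMultipartite 2 ![3 * b + 1, 3 * c + 2]) q}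
      (b + c + 2) :=
  stmt3_general b c
end
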